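/- arXiv:1303.4661 — 6 statements merged into one kernel-verified Lean document; each statement's English description precedes it below -/
import Mathlib

section
/- For every complex-valued Schwartz function φ on ℝ, the limit L := lim_{ε→0⁺} ∫_ℝ (i/(x+iε)) φ(x) dx exists, and lim_{t→+∞} ∫_ℝ (∫₀ᵗ e^{ixs} ds) φ(x) dx = L. In other words, as tempered distributions, ∫₀ᵗ e^{ixt₁} dt₁ = (e^{ixt}−1)/(ix) converges to i/(x+i0) as t → +∞. -/
/-!
Put `g s = ∫ e^{ixs} φ(x) dx`, a rescaled inverse Fourier transform of `φ`, hence integrable.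
Since `i/(x+iε) = ∫₀^∞ e^{(ix-ε)s} ds`, Fubini turns the regularized pairing into the Abel mean
`∫₀^∞ e^{-εs} g(s) ds` and the time-integral pairing into `∫₀ᵗ g(s) ds`; both tend to `∫₀^∞ g`,
by dominated convergence and by integrability of `g` respectively.
-/

open MeasureTheory Filter Set Complex FourierTransform

open scoped Topology

lemma integral_exp_I_mul_mul_eq_fourierInv (f : ℝ → ℂ) (s : ℝ) :
    ∫ x : ℝ, cexp (I * x * s) * f x = 𝓕⁻ f (s / (2 * Real.pi)) := by
  rw [Real.fourierInv_eq']
  congr 1 with x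
  rw [smul_eq_mul, Real.inner_apply]
  congr 2
  push_cast
  field_simp

lemma SchwartzMap.integrable_integral_exp_I_mul_mul (φ : SchwartzMap ℝ ℂ) :
    Integrable fun s : ℝ => ∫ x : ℝ, cexp (I * x * s) * φ x := by
  simp_rw [integral_exp_I_mul_mul_eq_fourierInv, ← SchwartzMap.fourierInv_coe]
  exact (𝓕⁻ φ).integrable.comp_div (by positivity)

lemma integral_exp_I_mul_mul_exp_neg_mul_Ioi (x : ℝ) {ε : ℝ} (hε : 0 < ε) :
    ∫ s in Ioi (0 : ℝ), cexp (I * x * s) * (Real.exp (-ε * s) : ℂ)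
      = I / ((x : ℂ) + I * ε) := by
  have hre : (I * x - ε).re < 0 := by simpa using hε
  have hne : (x : ℂ) + I * ε ≠ 0 := fun h => by simpa [hε.ne'] using congrArg im h
  have hne' : I * x - (ε : ℂ) ≠ 0 := fun h => by simp [h] at hre
  calc ∫ s in Ioi (0 : ℝ), cexp (I * x * s) * (Real.exp (-ε * s) : ℂ)
      = ∫ s in Ioi (0 : ℝ), cexp ((I * x - ε) * s) := by
        congr 1 with s
        rw [ofReal_exp, ← Complex.exp_add]
        push_cast
        ring_nf
    _ = I / ((x : ℂ) + I * ε) := by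
        rw [integral_exp_mul_complex_Ioi hre, ofReal_zero, mul_zero, Complex.exp_zero,
          div_eq_div_iff hne' hne]
        linear_combination (-(x : ℂ)) * I_mul_I

lemma integral_integral_exp_I_mul_mul_swap {μ : Measure ℝ} [SFinite μ] {w f : ℝ → ℂ}
    (hw : Integrable w μ) (hf : Integrable f) :
    ∫ x : ℝ, (∫ s, cexp (I * x * s) * w s ∂μ) * f x
      = ∫ s, w s * (∫ x : ℝ, cexp (I * x * s) * f x) ∂μ := by
  have hint : Integrable (fun p : ℝ × ℝ => cexp (I * p.1 * p.2) * (f p.1 * w p.2))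
      (volume.prod μ) := by
    refine (hf.mul_prod hw).bdd_mul (c := 1) (by fun_prop) (ae_of_all _ fun p => ?_)
    rw [norm_exp]
    simp
  calc ∫ x : ℝ, (∫ s, cexp (I * x * s) * w s ∂μ) * f x
      = ∫ x : ℝ, ∫ s, cexp (I * x * s) * (f x * w s) ∂μ := by
        congr 1 with x
        rw [← integral_mul_const]
        congr 1 with s
        ring
    _ = ∫ s, (∫ x : ℝ, cexp (I * x * s) * (f x * w s)) ∂μ := integral_integral_swap hint
    _ = ∫ s, w s * (∫ x : ℝ, cexp (I * x * s) * f x) ∂μ := by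
        congr 1 with s
        rw [← integral_const_mul]
        congr 1 with x
        ring

lemma tendsto_integral_Ioi_exp_neg_mul_smul {E : Type*} [NormedAddCommGroup E]
    [NormedSpace ℝ E] {g : ℝ → E} (hg : IntegrableOn g (Ioi 0)) :
    Tendsto (fun ε : ℝ => ∫ s in Ioi (0 : ℝ), Real.exp (-ε * s) • g s) (𝓝[>] 0)
      (𝓝 (∫ s in Ioi (0 : ℝ), g s)) := by
  refine tendsto_integral_filter_of_dominated_convergence (fun s => ‖g s‖)
    (Eventually.of_forall fun ε => ?_) ?_ hg.norm (ae_of_all _ fun s => ?_)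
  · exact (Continuous.aestronglyMeasurable (by fun_prop)).smul hg.aestronglyMeasurable
  · filter_upwards [self_mem_nhdsWithin] with ε (hε : 0 < ε)
    filter_upwards [ae_restrict_mem measurableSet_Ioi] with s (hs : 0 < s)
    rw [norm_smul, Real.norm_of_nonneg (Real.exp_pos _).le]
    exact mul_le_of_le_one_left (norm_nonneg _)
      (Real.exp_le_one_iff.2 (by linarith [mul_pos hε hs]))
  · have hcont : Continuous fun ε : ℝ => Real.exp (-ε * s) • g s := by fun_prop
    simpa using (hcont.tendsto 0).mono_left nhdsWithin_le_nhds

/-- As tempered distributions, `∫₀ᵗ e^{ixs} ds` converges to `i/(x+i0)` as `t → +∞`: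
for every Schwartz function `φ`, the limit `L` of the `ε`-regularized pairings exists and
the pairing of the time integral with `φ` tends to `L`. -/
theorem time_integral_tendsto_i_div_x_plus_i0 (φ : SchwartzMap ℝ ℂ) :
    ∃ L : ℂ,
      Tendsto (fun ε : ℝ => ∫ x : ℝ, (Complex.I / ((x : ℂ) + Complex.I * (ε : ℂ))) * φ x)
        (nhdsWithin 0 (Set.Ioi 0)) (nhds L) ∧
      Tendsto (fun t : ℝ =>
          ∫ x : ℝ, (∫ s in (0:ℝ)..t, Complex.exp (Complex.I * (x : ℂ) * (s : ℂ))) * φ x)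
        atTop (nhds L) := by
  set g : ℝ → ℂ := fun s => ∫ x : ℝ, cexp (I * x * s) * φ x
  have hg : IntegrableOn g (Ioi 0) := φ.integrable_integral_exp_I_mul_mul.integrableOn
  refine ⟨∫ s in Ioi (0 : ℝ), g s, ?_, ?_⟩
  · refine (tendsto_integral_Ioi_exp_neg_mul_smul hg).congr' ?_
    filter_upwards [self_mem_nhdsWithin] with ε (hε : 0 < ε)
    have hw : IntegrableOn (fun s : ℝ => (Real.exp (-ε * s) : ℂ)) (Ioi 0) :=
      (exp_neg_integrableOn_Ioi 0 hε).ofReal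
    simp_rw [← integral_exp_I_mul_mul_exp_neg_mul_Ioi _ hε,
      integral_integral_exp_I_mul_mul_swap hw φ.integrable, Complex.real_smul]
    rfl
  · refine (intervalIntegral_tendsto_integral_Ioi 0 hg tendsto_id).congr' ?_
    filter_upwards [eventually_ge_atTop 0] with t ht
    have hw : IntegrableOn (fun _ : ℝ => (1 : ℂ)) (Ioc 0 t) :=
      integrableOn_const measure_Ioc_lt_top.ne
    simpa [intervalIntegral.integral_of_le ht] using
      (integral_integral_exp_I_mul_mul_swap hw φ.integrable).symm
end

section
/- For every complex-valued Schwartz function φ on ℝ, lim_{t→+∞} (1/t) ∫_ℝ (∫₀ᵗ (∫₀^{t₁} e^{ixt₂} dt₂) dt₁) φ(x) dx = lim_{ε→0⁺} ∫_ℝ (i/(x+iε)) φ(x) dx, and both limits exist. Equivalently, as tempered distributions, (1−e^{ixt}+ixt)/(t x²) converges to i/(x+i0) as t → +∞. -/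
/-!
Put `ψ(s) = ∫ e^{ixs} φ(x) dx`. Since `i/(x+iε) = ∫₀^∞ e^{-εs} e^{ixs} ds` and
`∫₀ᵗ∫₀^{t₁} e^{ixt₂} dt₂ dt₁ = ∫₀ᵗ (t - s) e^{ixs} ds`, Fubini turns the `ε`-side into the Abel mean
`∫₀^∞ e^{-εs} ψ(s) ds` and the `t`-side into the Cesàro mean `∫₀ᵗ (1 - s/t) ψ(s) ds`. As `ψ` is a
rescaled Fourier transform of a Schwartz function, it is integrable, and dominated convergence
sends both means to `∫₀^∞ ψ`.
-/

open MeasureTheory Filter Set Complex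
open scoped FourierTransform Real Topology

section
variable {E : Type*} [NormedAddCommGroup E] [NormedSpace ℝ E]

theorem tendsto_setIntegral_exp_neg_mul_smul_Ioi {g : ℝ → E} (hg : IntegrableOn g (Ioi 0)) :
    Tendsto (fun ε : ℝ => ∫ s in Ioi 0, Real.exp (-ε * s) • g s) (𝓝[>] 0)
      (𝓝 (∫ s in Ioi 0, g s)) := by
  refine tendsto_integral_filter_of_dominated_convergence (fun s => ‖g s‖)
    (Eventually.of_forall fun ε => (Continuous.aestronglyMeasurable (by fun_prop)).smul
      hg.aestronglyMeasurable) ?_ hg.norm ?_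
  · filter_upwards [self_mem_nhdsWithin] with ε (hε : 0 < ε)
    filter_upwards [ae_restrict_mem measurableSet_Ioi] with s (hs : 0 < s)
    rw [norm_smul, Real.norm_of_nonneg (Real.exp_pos _).le]
    exact mul_le_of_le_one_left (norm_nonneg _) (Real.exp_le_one_iff.2 (by nlinarith))
  · refine Eventually.of_forall fun s => ?_
    have h : Continuous fun ε : ℝ => Real.exp (-ε * s) • g s := by fun_prop
    simpa using (h.tendsto 0).mono_left nhdsWithin_le_nhds

theorem tendsto_setIntegral_one_sub_div_smul_Ioc {g : ℝ → E} (hg : IntegrableOn g (Ioi 0)) :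
    Tendsto (fun t : ℝ => ∫ s in Ioc 0 t, (1 - s / t) • g s) atTop
      (𝓝 (∫ s in Ioi 0, g s)) := by
  have h_ind (t : ℝ) : ∫ s in Ioc 0 t, (1 - s / t) • g s
      = ∫ s in Ioi 0, (Ioc 0 t).indicator (fun s => (1 - s / t) • g s) s := by
    rw [setIntegral_indicator measurableSet_Ioc, inter_eq_self_of_subset_right Ioc_subset_Ioi_self]
  simp_rw [h_ind]
  refine tendsto_integral_filter_of_dominated_convergence (fun s => ‖g s‖)
    (Eventually.of_forall fun t => ((Continuous.aestronglyMeasurable (by fun_prop)).smul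
      hg.aestronglyMeasurable).indicator measurableSet_Ioc)
    ?_ hg.norm ?_
  · filter_upwards [eventually_gt_atTop 0] with t ht
    refine Eventually.of_forall fun s => ?_
    by_cases hs : s ∈ Ioc 0 t
    · rw [indicator_of_mem hs, norm_smul]
      have h₁ : s / t ≤ 1 := (div_le_one ht).2 hs.2
      have h₀ : 0 ≤ s / t := div_nonneg hs.1.le ht.le
      have h_weight : ‖1 - s / t‖ ≤ 1 := by
        rw [Real.norm_eq_abs, abs_le]
        constructor <;> linarith
      exact mul_le_of_le_one_left (norm_nonneg _) h_weight
    · simp [indicator_of_notMem hs]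
  · filter_upwards [ae_restrict_mem measurableSet_Ioi] with s (hs : 0 < s)
    have h_eq : ∀ᶠ t in atTop, (1 - s / t) • g s
        = (Ioc 0 t).indicator (fun s => (1 - s / t) • g s) s := by
      filter_upwards [eventually_ge_atTop s] with t ht
      rw [indicator_of_mem (show s ∈ Ioc 0 t from ⟨hs, ht⟩)]
    refine Tendsto.congr' h_eq ?_
    have h_div : Tendsto (fun t : ℝ => s / t) atTop (𝓝 0) :=
      tendsto_const_nhds.div_atTop tendsto_id
    simpa using (h_div.const_sub 1).smul_const (g s)

variable [CompleteSpace E]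

theorem integral_integral_zero_eq_integral_sub_smul {f : ℝ → E} (hf : Continuous f) (t : ℝ) :
    ∫ t₁ in 0..t, ∫ t₂ in 0..t₁, f t₂ = ∫ s in 0..t, (t - s) • f s := by
  have hF (u : ℝ) : HasDerivAt (fun u => ∫ t₂ in 0..u, f t₂) (f u) u :=
    hf.integral_hasStrictDerivAt 0 u |>.hasDerivAt
  have h_parts := intervalIntegral.integral_smul_deriv_eq_deriv_smul (a := 0) (b := t)
    (u := fun s => s - t) (u' := fun _ => 1) (fun s _ => (hasDerivAt_id s).sub_const t)
    (fun s _ => hF s) intervalIntegrable_const (hf.intervalIntegrable _ _)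
  simp only [sub_self, zero_smul, intervalIntegral.integral_same, smul_zero, one_smul,
    zero_sub] at h_parts
  rw [← neg_neg (∫ t₁ in 0..t, _), ← h_parts, ← intervalIntegral.integral_neg]
  simp only [← neg_smul, neg_sub]

end

noncomputable def expFourier (φ : ℝ → ℂ) (s : ℝ) : ℂ := ∫ x : ℝ, exp (I * x * s) * φ x

theorem expFourier_eq_fourierInv (φ : ℝ → ℂ) (s : ℝ) :
    expFourier φ s = 𝓕⁻ φ (s / (2 * π)) := by
  rw [Real.fourierInv_eq' φ]
  refine integral_congr_ae (Eventually.of_forall fun x => ?_)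
  simp only [smul_eq_mul, RCLike.inner_apply, conj_trivial]
  congr 2
  push_cast
  field_simp

theorem SchwartzMap.integrable_expFourier (φ : SchwartzMap ℝ ℂ) : Integrable (expFourier φ) := by
  have h := (𝓕⁻ φ).integrable.comp_div (by positivity : 2 * π ≠ 0)
  simp only [SchwartzMap.fourierInv_coe] at h
  simpa [Function.comp_def, ← expFourier_eq_fourierInv] using h

theorem integral_setIntegral_smul_exp_mul_mul {φ : ℝ → ℂ} (hφ : Integrable φ) {k : ℝ → ℝ}
    {S : Set ℝ} (hk : IntegrableOn k S) :
    ∫ x : ℝ, (∫ s in S, k s • exp (I * x * s)) * φ x = ∫ s in S, k s • expFourier φ s := by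
  have h_prod : Integrable (fun p : ℝ × ℝ => k p.2 • exp (I * p.1 * p.2) * φ p.1)
      (volume.prod (volume.restrict S)) := by
    refine (hφ.norm.mul_prod hk.norm).mono' ?_ (Eventually.of_forall fun p => ?_)
    · exact (hk.aestronglyMeasurable.comp_snd.smul (by fun_prop : Continuous fun p : ℝ × ℝ =>
        exp (I * p.1 * p.2)).aestronglyMeasurable).mul hφ.aestronglyMeasurable.comp_fst
    · simp [norm_exp, mul_comm]
  simp_rw [← integral_mul_const]
  rw [integral_integral_swap h_prod]
  simp_rw [expFourier, ← integral_smul, smul_mul_assoc]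

theorem I_div_add_I_mul_eq_setIntegral_exp (x : ℝ) {ε : ℝ} (hε : 0 < ε) :
    I / (x + I * ε) = ∫ s in Ioi 0, Real.exp (-ε * s) • exp (I * x * s) := by
  have h_re : (I * x - ε).re < 0 := by simpa using hε
  have h_ne : I * x - ε ≠ 0 := fun h => by simp [h] at h_re
  have h_ne' : (x : ℂ) + I * ε ≠ 0 := fun h => hε.ne' (by simpa using congrArg im h)
  have h_exp (s : ℝ) : Real.exp (-ε * s) • exp (I * x * s) = exp ((I * x - ε) * s) := by
    rw [Complex.real_smul, ofReal_exp, ← exp_add]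
    push_cast
    ring_nf
  simp_rw [h_exp, integral_exp_mul_complex_Ioi h_re, ofReal_zero, mul_zero, exp_zero]
  field_simp
  linear_combination (x : ℂ) * I_sq

theorem integral_I_div_add_I_mul_mul_eq {φ : ℝ → ℂ} (hφ : Integrable φ) {ε : ℝ} (hε : 0 < ε) :
    ∫ x : ℝ, I / (x + I * ε) * φ x = ∫ s in Ioi 0, Real.exp (-ε * s) • expFourier φ s := by
  simp_rw [I_div_add_I_mul_eq_setIntegral_exp _ hε]
  exact integral_setIntegral_smul_exp_mul_mul hφ (exp_neg_integrableOn_Ioi 0 hε)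

theorem one_div_mul_integral_integral_integral_exp_mul_eq {φ : ℝ → ℂ} (hφ : Integrable φ) {t : ℝ}
    (ht : 0 < t) :
    1 / (t : ℂ) * ∫ x : ℝ, (∫ t₁ in 0..t, ∫ t₂ in 0..t₁, exp (I * x * t₂)) * φ x
      = ∫ s in Ioc 0 t, (1 - s / t) • expFourier φ s := by
  have h_cauchy (x : ℝ) : ∫ t₁ in 0..t, ∫ t₂ in 0..t₁, exp (I * x * t₂)
      = ∫ s in Ioc 0 t, (t - s) • exp (I * x * s) := by
    rw [integral_integral_zero_eq_integral_sub_smul (by fun_prop),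
      intervalIntegral.integral_of_le ht.le]
  simp_rw [h_cauchy]
  rw [integral_setIntegral_smul_exp_mul_mul hφ (Continuous.integrableOn_Ioc (by fun_prop)),
    one_div, ← ofReal_inv, ← Complex.real_smul, ← integral_smul]
  refine setIntegral_congr_fun measurableSet_Ioc fun s _ => ?_
  rw [smul_smul]
  congr 1
  field_simp

/-- As tempered distributions, `(1 − e^{ixt} + ixt)/(t x²) = (1/t)∫₀ᵗ∫₀^{t₁} e^{ixt₂} dt₂ dt₁`
converges to `i/(x+i0)` as `t → +∞`. -/
theorem cesaro_time_integral_tendsto_i_div_x_plus_i0 (φ : SchwartzMap ℝ ℂ) :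
    ∃ L : ℂ,
      Tendsto (fun ε : ℝ => ∫ x : ℝ, (Complex.I / ((x : ℂ) + Complex.I * (ε : ℂ))) * φ x)
        (nhdsWithin 0 (Set.Ioi 0)) (nhds L) ∧
      Tendsto (fun t : ℝ =>
          (1 / (t : ℂ)) * ∫ x : ℝ,
            (∫ t₁ in (0:ℝ)..t, ∫ t₂ in (0:ℝ)..t₁,
              Complex.exp (Complex.I * (x : ℂ) * (t₂ : ℂ))) * φ x)
        atTop (nhds L) := by
  have hψ := φ.integrable_expFourier.integrableOn (s := Ioi 0)
  refine ⟨∫ s in Ioi 0, expFourier φ s, ?_, ?_⟩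
  · refine (tendsto_setIntegral_exp_neg_mul_smul_Ioi hψ).congr' ?_
    filter_upwards [self_mem_nhdsWithin] with ε hε
    exact (integral_I_div_add_I_mul_mul_eq φ.integrable hε).symm
  · refine (tendsto_setIntegral_one_sub_div_smul_Ioc hψ).congr' ?_
    filter_upwards [eventually_gt_atTop 0] with t ht
    exact (one_div_mul_integral_integral_integral_exp_mul_eq φ.integrable ht).symm
end

section
/- For every complex-valued Schwartz function φ on ℝ, lim_{t→+∞} (1/t) ∫_ℝ (∫₀ᵗ ∫₀ᵗ e^{ix(t₁−t₂)} dt₁ dt₂) φ(x) dx = 2π φ(0). Equivalently, as tempered distributions, (2 − e^{ixt} − e^{−ixt})/(t x²) converges to 2π δ(x) as t → +∞. -/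
/-!
The double integral is `|∫₀ᵗ e^{ixs} ds|² = (2 - 2 cos tx) / x²`, so after the substitution
`y = t x` the pairing with `φ` becomes `∫ K(y) φ(y / t) dy` for the integrable kernel
`K(y) = (2 - 2 cos y) / y²`. By dominated convergence this tends to `φ(0) ∫ K`, and `∫ K = 2π`
because `K(2πξ)` is the Fourier transform of the triangle function `max 0 (1 - |s|)`, so that
Fourier inversion at `0` gives `∫ K(2πξ) dξ = 1`.
-/

open MeasureTheory Filter
open Complex Real BoundedContinuousFunction
open scoped FourierTransform

theorem tendsto_integral_smul_comp_div_atTop {E : Type*} [NormedAddCommGroup E]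
    [NormedSpace ℝ E] [CompleteSpace E] {K : ℝ → ℝ} (hK : Integrable K) (φ : ℝ →ᵇ E) :
    Tendsto (fun t => ∫ y, K y • φ (y / t)) atTop (nhds ((∫ y, K y) • φ 0)) := by
  rw [← integral_smul_const]
  refine tendsto_integral_filter_of_dominated_convergence (fun y => ‖K y‖ * ‖φ‖)
    (.of_forall fun t => hK.aestronglyMeasurable.smul
      (φ.continuous.comp (continuous_id.div_const t)).aestronglyMeasurable)
    (.of_forall fun t => .of_forall fun y => ?_) (hK.norm.mul_const _) (.of_forall fun y => ?_)
  · rw [norm_smul]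
    exact mul_le_mul_of_nonneg_left (φ.norm_coe_le_norm _) (norm_nonneg _)
  · refine tendsto_const_nhds.smul (φ.continuous.tendsto 0 |>.comp ?_)
    simpa using (tendsto_const_nhds (x := y)).div_atTop tendsto_id

/-- The continuous Fejér kernel up to normalization; `0` at `y = 0`, where the continuous
extension would be `1`. -/
noncomputable def fejerKernel (y : ℝ) : ℝ := (2 - 2 * Real.cos y) / y ^ 2

lemma fejerKernel_nonneg (y : ℝ) : 0 ≤ fejerKernel y :=
  div_nonneg (by linarith [Real.cos_le_one y]) (sq_nonneg y)

lemma fejerKernel_le (y : ℝ) : fejerKernel y ≤ 8 * (1 + y ^ 2)⁻¹ := by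
  rcases eq_or_ne y 0 with rfl | hy
  · simp [fejerKernel]
  rw [fejerKernel, ← div_eq_mul_inv, div_le_div_iff₀ (by positivity) (by positivity)]
  nlinarith [Real.neg_one_le_cos y, Real.one_sub_sq_div_two_le_cos (x := y)]

lemma measurable_fejerKernel : Measurable fejerKernel := by
  unfold fejerKernel; fun_prop

lemma integrable_fejerKernel : Integrable fejerKernel :=
  (integrable_inv_one_add_sq.const_mul 8).mono' measurable_fejerKernel.aestronglyMeasurable
    (.of_forall fun y => by
      rw [Real.norm_of_nonneg (fejerKernel_nonneg y)]; exact fejerKernel_le y)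

lemma integral_one_sub_mul_cos {y : ℝ} (hy : y ≠ 0) :
    ∫ s in (0:ℝ)..1, (1 - s) * Real.cos (y * s) = (1 - Real.cos y) / y ^ 2 := by
  have hderiv (s : ℝ) : HasDerivAt
      (fun s => (1 - s) * Real.sin (y * s) / y - Real.cos (y * s) / y ^ 2)
      ((1 - s) * Real.cos (y * s)) s := by
    have hys : HasDerivAt (y * ·) y s := by simpa using (hasDerivAt_id s).const_mul y
    refine (((((hasDerivAt_id' s).const_sub 1).mul hys.sin).div_const y).sub
      (hys.cos.div_const (y ^ 2))).congr_deriv ?_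
    field_simp
    ring
  rw [intervalIntegral.integral_eq_sub_of_hasDerivAt (fun s _ => hderiv s)
    (by apply Continuous.intervalIntegrable; fun_prop)]
  simp only [mul_one, mul_zero, sub_self, sub_zero, Real.sin_zero, Real.cos_zero, zero_mul,
    zero_div]
  ring

noncomputable def triangle (s : ℝ) : ℝ := max 0 (1 - |s|)

@[fun_prop]
lemma continuous_triangle : Continuous triangle := by
  unfold triangle; fun_prop

lemma triangle_neg (s : ℝ) : triangle (-s) = triangle s := by
  simp [triangle]

lemma support_triangle_subset : Function.support triangle ⊆ Set.Ioo (-1) 1 := by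
  intro s hs
  have h_abs : |s| < 1 := by
    by_contra! h
    exact hs (max_eq_left (by linarith))
  exact abs_lt.1 h_abs

lemma integrable_triangle : Integrable (fun s => (triangle s : ℂ)) :=
  (continuous_ofReal.comp continuous_triangle).integrable_of_hasCompactSupport
    ((HasCompactSupport.of_support_subset_isCompact isCompact_Icc
      (support_triangle_subset.trans Set.Ioo_subset_Icc_self)).comp_left ofReal_zero)

lemma fourier_triangle {ξ : ℝ} (hξ : ξ ≠ 0) :
    𝓕 (fun s => (triangle s : ℂ)) ξ = fejerKernel (2 * π * ξ) := by
  set y := 2 * π * ξ with hy_def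
  have hy : y ≠ 0 := by positivity
  set g : ℝ → ℂ := fun v => exp (↑(-2 * π * v * ξ) * I) • (triangle v : ℂ)
  have hg : Continuous g := by fun_prop
  have hg_add_neg (v : ℝ) : g v + g (-v) = ((2 * (triangle v * Real.cos (y * v)) : ℝ) : ℂ) := by
    have h2cos : exp (↑(-2 * π * v * ξ) * I) + exp (↑(-2 * π * -v * ξ) * I)
        = 2 * Complex.cos ↑(y * v) := by
      rw [two_cos, add_comm]
      push_cast [hy_def]
      ring_nf
    simp only [g, triangle_neg, smul_eq_mul, ← add_mul, h2cos]
    push_cast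
    ring
  calc 𝓕 (fun s => (triangle s : ℂ)) ξ
      = ∫ v in (-1)..1, g v := by
        rw [Real.fourier_real_eq_integral_exp_smul,
          intervalIntegral.integral_eq_integral_of_support_subset]
        refine fun v hv => Set.Ioo_subset_Ioc_self (support_triangle_subset fun h => hv ?_)
        simp [g, h]
    _ = ∫ v in (0:ℝ)..1, (g v + g (-v)) := by
        rw [← intervalIntegral.integral_add_adjacent_intervals (b := 0)
          (hg.intervalIntegrable _ _) (hg.intervalIntegrable _ _), add_comm,
          intervalIntegral.integral_add (hg.intervalIntegrable _ _)
          (g := fun v => g (-v)) ((hg.comp continuous_neg).intervalIntegrable _ _)]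
        simp [intervalIntegral.integral_comp_neg g]
    _ = ∫ v in (0:ℝ)..1, ((2 * ((1 - v) * Real.cos (y * v)) : ℝ) : ℂ) := by
        refine intervalIntegral.integral_congr fun v hv => ?_
        rw [Set.uIcc_of_le zero_le_one] at hv
        rw [hg_add_neg, triangle, abs_of_nonneg hv.1, max_eq_right (by linarith [hv.2])]
    _ = fejerKernel y := by
        rw [intervalIntegral.integral_ofReal, intervalIntegral.integral_const_mul,
          integral_one_sub_mul_cos hy, fejerKernel]
        congr 1
        ring

lemma integral_fejerKernel : ∫ y, fejerKernel y = 2 * π := by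
  have hF : 𝓕 (fun s => (triangle s : ℂ)) =ᵐ[volume]
      fun ξ => ((fejerKernel (2 * π * ξ) : ℝ) : ℂ) := by
    filter_upwards [Measure.ae_ne volume 0] with ξ hξ using fourier_triangle hξ
  have h_int : Integrable (fun ξ => fejerKernel (2 * π * ξ)) :=
    integrable_fejerKernel.comp_mul_left' (by positivity)
  have h_inv := integrable_triangle.fourierInv_fourier_eq (h_int.ofReal.congr hF.symm)
    (continuous_ofReal.comp continuous_triangle).continuousAt (v := 0)
  simp only [Real.fourierInv_eq, inner_zero_right, AddChar.map_zero_eq_one, one_smul] at h_inv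
  rw [integral_congr_ae hF, integral_complex_ofReal, Measure.integral_comp_mul_left, smul_eq_mul,
    abs_of_pos (by positivity)] at h_inv
  have h_one : triangle 0 = 1 := by simp [triangle]
  rw [h_one] at h_inv
  have h_real : (2 * π)⁻¹ * ∫ y, fejerKernel y = 1 := by exact_mod_cast h_inv
  field_simp at h_real
  exact h_real

lemma integral_integral_cexp_mul_sub {x : ℝ} (hx : x ≠ 0) (t : ℝ) :
    ∫ t₁ in (0:ℝ)..t, ∫ t₂ in (0:ℝ)..t, cexp (I * x * (t₁ - t₂))
      = ((2 - 2 * Real.cos (t * x)) / x ^ 2 : ℝ) := by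
  set c : ℂ := I * x with hc_def
  have hc : c ≠ 0 := mul_ne_zero I_ne_zero (ofReal_ne_zero.2 hx)
  have h_split (t₁ t₂ : ℝ) : cexp (c * (t₁ - t₂)) = cexp (c * t₁) * cexp (-c * t₂) := by
    rw [← Complex.exp_add]; ring_nf
  have h_prod : cexp (c * t) * cexp (-c * t) = 1 := by
    rw [← Complex.exp_add]; ring_nf; exact Complex.exp_zero
  have h_sum : cexp (c * t) + cexp (-c * t) = 2 * Complex.cos (t * x) := by
    rw [two_cos, hc_def]; ring_nf
  simp_rw [h_split, intervalIntegral.integral_const_mul, intervalIntegral.integral_mul_const,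
    integral_exp_mul_complex hc, integral_exp_mul_complex (neg_ne_zero.2 hc)]
  have hc_sq : c * -c = x ^ 2 := by rw [hc_def]; linear_combination (-(x:ℂ) ^ 2) * I_sq
  simp only [ofReal_zero, mul_zero, Complex.exp_zero]
  rw [div_mul_div_comm, hc_sq]
  push_cast
  congr 1
  linear_combination h_prod - h_sum

lemma integral_fejerKernel_smul_comp_div {E : Type*} [NormedAddCommGroup E] [NormedSpace ℝ E]
    {t : ℝ} (ht : 0 < t) (φ : ℝ → E) :
    ∫ y, fejerKernel y • φ (y / t) = t⁻¹ • ∫ x, ((2 - 2 * Real.cos (t * x)) / x ^ 2) • φ x := by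
  have h_scale (x : ℝ) : (2 - 2 * Real.cos (t * x)) / x ^ 2 = t ^ 2 * fejerKernel (t * x) := by
    rw [fejerKernel]; field_simp
  simp_rw [h_scale, mul_smul, integral_smul]
  have h_cancel : ∫ x, fejerKernel (t * x) • φ x = ∫ x, fejerKernel (t * x) • φ (t * x / t) := by
    simp_rw [mul_div_cancel_left₀ _ ht.ne']
  rw [h_cancel, Measure.integral_comp_mul_left (fun y => fejerKernel y • φ (y / t)), smul_smul,
    smul_smul, abs_of_pos (inv_pos.2 ht),
    show t⁻¹ * t ^ 2 * t⁻¹ = 1 by field_simp, one_smul]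

/-- As tempered distributions, `(1/t)∫₀ᵗ∫₀ᵗ e^{ix(t₁−t₂)} dt₁ dt₂` converges to `2π δ(x)`
as `t → +∞`: paired with a Schwartz function `φ` it tends to `2π φ(0)`. -/
theorem cesaro_double_time_integral_tendsto_two_pi_delta (φ : SchwartzMap ℝ ℂ) :
    Tendsto (fun t : ℝ =>
        (1 / (t : ℂ)) * ∫ x : ℝ,
          (∫ t₁ in (0:ℝ)..t, ∫ t₂ in (0:ℝ)..t,
            Complex.exp (Complex.I * (x : ℂ) * ((t₁ : ℂ) - (t₂ : ℂ)))) * φ x)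
      atTop (nhds ((2 * Real.pi : ℝ) * φ 0)) := by
  have h := tendsto_integral_smul_comp_div_atTop integrable_fejerKernel
    φ.toBoundedContinuousFunction
  simp only [integral_fejerKernel, SchwartzMap.toBoundedContinuousFunction_apply] at h
  rw [← Complex.real_smul]
  refine h.congr' ?_
  filter_upwards [eventually_gt_atTop 0] with t ht
  rw [integral_fejerKernel_smul_comp_div ht, Complex.real_smul, one_div, ofReal_inv]
  congr 1
  refine integral_congr_ae ?_
  filter_upwards [Measure.ae_ne volume 0] with x hx
  rw [integral_integral_cexp_mul_sub hx, Complex.real_smul]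
end

section
/- Let Q be as in the context and let k₁, k₂ ∈ ℝ and t, r ∈ ℂ. For ψ₁(x) = t e^{ik₁x} and ψ₂(x) = e^{ik₂x} + r e^{−ik₂x} one has ∫_ℝ conj(ψ₁(x)) · (I ψ₂)(x) dx = (k₁ + k₂) · conj(t) · Q̂'(k₁ − k₂) + (k₁ − k₂) · conj(t) · r · Q̂'(k₁ + k₂), where (I f)(x) = −i (Q'(x) f(x))' − i Q'(x) f'(x). -/
open MeasureTheory Filter
open scoped ContDiff

/-- The Fourier transform of `Q'`: `Q̂'(k) = ∫ Q'(x) e^{−ikx} dx`. -/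
noncomputable def QhatD (Q : ℝ → ℝ) (k : ℝ) : ℂ :=
  ∫ x : ℝ, ((deriv Q x : ℝ) : ℂ) * Complex.exp (-Complex.I * (k : ℂ) * (x : ℂ))

/-- The current operator `I = pQ'(x) + Q'(x)p`, `p = −i d/dx`, acting on a function `f`:
`(I f)(x) = −i (Q'(x) f(x))' − i Q'(x) f'(x)`. -/
noncomputable def currentOp (Q : ℝ → ℝ) (f : ℝ → ℂ) (x : ℝ) : ℂ :=
  -Complex.I * deriv (fun y : ℝ => ((deriv Q y : ℝ) : ℂ) * f y) x -
    Complex.I * ((deriv Q x : ℝ) : ℂ) * deriv f x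

private lemma integral_deriv_zero' (f : ℝ → ℂ) (hf : ContDiff ℝ 1 f)
    (hs : HasCompactSupport f) : ∫ x : ℝ, deriv f x = 0 := by
  have hd : Continuous (deriv f) :=
    ((contDiff_succ_iff_deriv.mp (by exact_mod_cast hf : ContDiff ℝ (0+1) f)).2.2.continuous)
  have hint : Integrable (deriv f) := hd.integrable_of_hasCompactSupport hs.deriv
  rw [← intervalIntegral.integral_Iic_add_Ioi (b := 0) hint.integrableOn hint.integrableOn,
    hs.integral_Iic_deriv_eq hf, hs.integral_Ioi_deriv_eq hf]
  ring

private lemma hasDerivAt_cexp_mul (c : ℂ) (x : ℝ) :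
    HasDerivAt (fun y : ℝ => Complex.exp (c * (y : ℂ))) (c * Complex.exp (c * (x : ℂ))) x := by
  have h0 : HasDerivAt (fun y : ℝ => (y : ℂ)) 1 x := (hasDerivAt_id x).ofReal_comp
  simpa [mul_comm] using (h0.const_mul c).cexp

set_option maxHeartbeats 2000000 in
/-- Matrix element of the current between a transmitted wave and an incident-plus-reflected
wave: `⟨te^{ik₁x}| I |e^{ik₂x} + re^{−ik₂x}⟩
  = (k₁+k₂) conj(t) Q̂'(k₁−k₂) + (k₁−k₂) conj(t) r Q̂'(k₁+k₂)`. -/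
theorem current_matrix_element_mixed (Q : ℝ → ℝ) (hQ : ContDiff ℝ (⊤ : ℕ∞) Q) (a b : ℝ)
    (ha : 0 < a) (hab : a < b)
    (hQ0 : ∀ x : ℝ, x ≤ a → Q x = 0) (hQ1 : ∀ x : ℝ, b ≤ x → Q x = 1)
    (k₁ k₂ : ℝ) (t r : ℂ) :
    (∫ x : ℝ, (starRingEnd ℂ) (t * Complex.exp (Complex.I * (k₁ : ℂ) * (x : ℂ))) *
        currentOp Q (fun y : ℝ =>
          Complex.exp (Complex.I * (k₂ : ℂ) * (y : ℂ)) +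
            r * Complex.exp (-Complex.I * (k₂ : ℂ) * (y : ℂ))) x)
      = ((k₁ : ℂ) + (k₂ : ℂ)) * (starRingEnd ℂ) t * QhatD Q (k₁ - k₂)
        + ((k₁ : ℂ) - (k₂ : ℂ)) * (starRingEnd ℂ) t * r * QhatD Q (k₁ + k₂) := by
  -- notation
  set f : ℝ → ℂ := fun y : ℝ =>
    Complex.exp (Complex.I * (k₂ : ℂ) * (y : ℂ)) +
      r * Complex.exp (-Complex.I * (k₂ : ℂ) * (y : ℂ)) with hf_def
  set Qc : ℝ → ℂ := fun x : ℝ => ((deriv Q x : ℝ) : ℂ) with hQc_def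
  -- smoothness of deriv Q
  have h1i : (1 : WithTop ℕ∞) ≤ ∞ := by exact_mod_cast le_top
  have hQ' : ContDiff ℝ ∞ (deriv Q) := (contDiff_infty_iff_deriv.mp (hQ.of_le (by simp))).2
  have hQc_smooth : ContDiff ℝ ∞ Qc := Complex.ofRealCLM.contDiff.comp hQ'
  -- compact support of deriv Q
  have hzero : ∀ x : ℝ, x ∉ Set.Icc a b → deriv Q x = 0 := by
    intro x hx
    rw [Set.mem_Icc, not_and_or, not_le, not_le] at hx
    rcases hx with hx | hx
    · have hev : Q =ᶠ[nhds x] fun _ => (0 : ℝ) := by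
        filter_upwards [Iio_mem_nhds hx] with y hy using hQ0 y (le_of_lt hy)
      rw [hev.deriv_eq, deriv_const]
    · have hev : Q =ᶠ[nhds x] fun _ => (1 : ℝ) := by
        filter_upwards [Ioi_mem_nhds hx] with y hy using hQ1 y (le_of_lt hy)
      rw [hev.deriv_eq, deriv_const]
  have hsupp : HasCompactSupport Qc := by
    apply HasCompactSupport.intro (isCompact_Icc (a := a) (b := b))
    intro x hx
    simp [hQc_def, hzero x hx]
  -- pointwise derivative facts
  have hQd : ∀ x : ℝ, HasDerivAt Qc ((deriv (deriv Q) x : ℝ) : ℂ) x := fun x =>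
    ((hQ'.differentiable (by simp) x).hasDerivAt).ofReal_comp
  have hfd : ∀ x : ℝ, HasDerivAt f
      (Complex.I * (k₂ : ℂ) * Complex.exp (Complex.I * (k₂ : ℂ) * (x : ℂ)) +
        r * (-Complex.I * (k₂ : ℂ) * Complex.exp (-Complex.I * (k₂ : ℂ) * (x : ℂ)))) x := by
    intro x
    exact (hasDerivAt_cexp_mul (Complex.I * (k₂ : ℂ)) x).add
      ((hasDerivAt_cexp_mul (-Complex.I * (k₂ : ℂ)) x).const_mul r)
  -- the total derivative part
  set g : ℝ → ℂ := fun x : ℝ => Complex.exp (-Complex.I * (k₁ : ℂ) * (x : ℂ)) * (Qc x * f x)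
    with hg_def
  have hgd : ∀ x : ℝ, HasDerivAt g
      (-Complex.I * (k₁ : ℂ) * Complex.exp (-Complex.I * (k₁ : ℂ) * (x : ℂ)) * (Qc x * f x) +
        Complex.exp (-Complex.I * (k₁ : ℂ) * (x : ℂ)) *
          ((deriv (deriv Q) x : ℝ) * f x + Qc x *
            (Complex.I * (k₂ : ℂ) * Complex.exp (Complex.I * (k₂ : ℂ) * (x : ℂ)) +
              r * (-Complex.I * (k₂ : ℂ) * Complex.exp (-Complex.I * (k₂ : ℂ) * (x : ℂ)))))) x :=
    fun x => (hasDerivAt_cexp_mul (-Complex.I * (k₁ : ℂ)) x).mul ((hQd x).mul (hfd x))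
  -- smoothness of f and g
  have hexp_smooth : ∀ c : ℂ, ContDiff ℝ ∞ (fun y : ℝ => Complex.exp (c * (y : ℂ))) := fun c =>
    Complex.contDiff_exp.comp (contDiff_const.mul Complex.ofRealCLM.contDiff)
  have hf_smooth : ContDiff ℝ ∞ f :=
    (hexp_smooth (Complex.I * (k₂ : ℂ))).add
      (contDiff_const.mul (hexp_smooth (-Complex.I * (k₂ : ℂ))))
  have hg_smooth : ContDiff ℝ ∞ g :=
    (hexp_smooth (-Complex.I * (k₁ : ℂ))).mul (hQc_smooth.mul hf_smooth)
  have hQf_supp : HasCompactSupport (fun x : ℝ => Qc x * f x) := hsupp.mul_right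
  have hg_supp : HasCompactSupport g := hQf_supp.mul_left
  -- integrands
  set h₁ : ℝ → ℂ := fun x : ℝ =>
    Qc x * Complex.exp (-Complex.I * ((k₁ - k₂ : ℝ) : ℂ) * (x : ℂ)) with hh₁_def
  set h₂ : ℝ → ℂ := fun x : ℝ =>
    Qc x * Complex.exp (-Complex.I * ((k₁ + k₂ : ℝ) : ℂ) * (x : ℂ)) with hh₂_def
  -- pointwise identity
  have key : ∀ x : ℝ,
      (starRingEnd ℂ) (t * Complex.exp (Complex.I * (k₁ : ℂ) * (x : ℂ))) * currentOp Q f x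
        = -Complex.I * (starRingEnd ℂ) t * deriv g x +
          (((k₁ : ℂ) + (k₂ : ℂ)) * (starRingEnd ℂ) t * h₁ x +
            ((k₁ : ℂ) - (k₂ : ℂ)) * (starRingEnd ℂ) t * r * h₂ x) := by
    intro x
    have econj : (starRingEnd ℂ) (Complex.exp (Complex.I * (k₁ : ℂ) * (x : ℂ)))
        = Complex.exp (-Complex.I * (k₁ : ℂ) * (x : ℂ)) := by
      rw [← Complex.exp_conj]
      simp [map_mul, Complex.conj_I, Complex.conj_ofReal]
    have e1 : Complex.exp (-Complex.I * ((k₁ - k₂ : ℝ) : ℂ) * (x : ℂ))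
        = Complex.exp (-Complex.I * (k₁ : ℂ) * (x : ℂ)) *
          Complex.exp (Complex.I * (k₂ : ℂ) * (x : ℂ)) := by
      rw [← Complex.exp_add]; congr 1; push_cast; ring
    have e2 : Complex.exp (-Complex.I * ((k₁ + k₂ : ℝ) : ℂ) * (x : ℂ))
        = Complex.exp (-Complex.I * (k₁ : ℂ) * (x : ℂ)) *
          Complex.exp (-Complex.I * (k₂ : ℂ) * (x : ℂ)) := by
      rw [← Complex.exp_add]; congr 1; push_cast; ring
    rw [currentOp, (hgd x).deriv, (show HasDerivAt (fun y => Qc y * f y) _ x from (hQd x).mul (hfd x)).deriv, (hfd x).deriv, map_mul, econj]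
    simp only [hh₁_def, hh₂_def, hf_def, hQc_def]
    rw [e1, e2]
    ring_nf
    simp only [Complex.I_sq]
    ring
  -- integrability
  have hint_dg : Integrable (fun x : ℝ => -Complex.I * (starRingEnd ℂ) t * deriv g x) := by
    have : Continuous (deriv g) :=
      ((contDiff_infty_iff_deriv.mp hg_smooth).2.continuous)
    exact (this.integrable_of_hasCompactSupport hg_supp.deriv).const_mul _
  have hint₁ : Integrable h₁ := by
    have : Continuous h₁ := hQc_smooth.continuous.mul (hexp_smooth _).continuous
    exact this.integrable_of_hasCompactSupport hsupp.mul_right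
  have hint₂ : Integrable h₂ := by
    have : Continuous h₂ := hQc_smooth.continuous.mul (hexp_smooth _).continuous
    exact this.integrable_of_hasCompactSupport hsupp.mul_right
  -- main computation
  have hsum : Integrable (fun x : ℝ =>
      ((k₁ : ℂ) + (k₂ : ℂ)) * (starRingEnd ℂ) t * h₁ x +
        ((k₁ : ℂ) - (k₂ : ℂ)) * (starRingEnd ℂ) t * r * h₂ x) :=
    (hint₁.const_mul _).add (hint₂.const_mul _)
  rw [integral_congr_ae (Filter.Eventually.of_forall key), integral_add hint_dg hsum,
    integral_add (hint₁.const_mul _) (hint₂.const_mul _),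
    integral_const_mul, integral_const_mul, integral_const_mul,
    integral_deriv_zero' g (hg_smooth.of_le h1i) hg_supp]
  simp only [hh₁_def, hh₂_def, QhatD, hQc_def]
  ring
end

section
/- Let Q be as in the context and let k₁, k₂ ∈ ℝ and r₁, r₂ ∈ ℂ. For ψ₁(x) = e^{ik₁x} + r₁ e^{−ik₁x} and ψ₂(x) = e^{ik₂x} + r₂ e^{−ik₂x} one has ∫_ℝ conj(ψ₁(x)) · (I ψ₂)(x) dx = (k₁ + k₂) Q̂'(k₁ − k₂) + (k₂ − k₁) conj(r₁) Q̂'(−k₁ − k₂) + (k₁ − k₂) r₂ Q̂'(k₁ + k₂) − (k₁ + k₂) conj(r₁) r₂ Q̂'(k₂ − k₁), where (I f)(x) = −i (Q'(x) f(x))' − i Q'(x) f'(x). -/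
open MeasureTheory Filter

private lemma expE_hasDerivAt (m : ℂ) (x : ℝ) :
    HasDerivAt (fun y : ℝ => Complex.exp (m * (y : ℂ))) (m * Complex.exp (m * (x : ℂ))) x := by
  have h1 : HasDerivAt (fun y : ℝ => m * (y : ℂ)) m x := by
    simpa using (Complex.ofRealCLM.hasDerivAt (x := x)).const_mul m
  simpa [mul_comm] using h1.cexp

private lemma ibp_aux (Q : ℝ → ℝ) (a b : ℝ)
    (hdQdiff : Differentiable ℝ (deriv Q))
    (hdQcont : Continuous (deriv Q)) (hddQcont : Continuous (deriv (deriv Q)))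
    (hdQ0 : ∀ x : ℝ, x ∉ Set.Icc a b → deriv Q x = 0)
    (hddQ0 : ∀ x : ℝ, x ∉ Set.Icc a b → deriv (deriv Q) x = 0)
    (P P' : ℝ → ℂ) (hP : ∀ x, HasDerivAt P (P' x) x)
    (hPc : Continuous P) (hP'c : Continuous P') :
    ∫ x : ℝ, ((deriv (deriv Q) x : ℝ) : ℂ) * P x
      = -∫ x : ℝ, ((deriv Q x : ℝ) : ℂ) * P' x := by
  have hc : ∀ x : ℝ, x ∉ Set.Ioc (a - 1) (b + 1) → x ∉ Set.Icc a b := by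
    intro x hx hmem
    exact hx ⟨by linarith [hmem.1], by linarith [hmem.2]⟩
  have h1 : (∫ x : ℝ, ((deriv (deriv Q) x : ℝ) : ℂ) * P x)
      = ∫ x in (a-1)..(b+1), ((deriv (deriv Q) x : ℝ) : ℂ) * P x := by
    symm
    apply intervalIntegral.integral_eq_integral_of_support_subset
    intro x hx
    by_contra hxn
    exact hx (by simp [hddQ0 x (hc x hxn)])
  have h2 : (∫ x : ℝ, ((deriv Q x : ℝ) : ℂ) * P' x)
      = ∫ x in (a-1)..(b+1), ((deriv Q x : ℝ) : ℂ) * P' x := by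
    symm
    apply intervalIntegral.integral_eq_integral_of_support_subset
    intro x hx
    by_contra hxn
    exact hx (by simp [hdQ0 x (hc x hxn)])
  have hA : IntervalIntegrable (fun x : ℝ => ((deriv (deriv Q) x : ℝ) : ℂ) * P x)
      volume (a-1) (b+1) :=
    ((Complex.continuous_ofReal.comp hddQcont).mul hPc).intervalIntegrable _ _
  have hB : IntervalIntegrable (fun x : ℝ => ((deriv Q x : ℝ) : ℂ) * P' x)
      volume (a-1) (b+1) :=
    ((Complex.continuous_ofReal.comp hdQcont).mul hP'c).intervalIntegrable _ _
  have key : (∫ x in (a-1)..(b+1), ((deriv (deriv Q) x : ℝ) : ℂ) * P x)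
      + (∫ x in (a-1)..(b+1), ((deriv Q x : ℝ) : ℂ) * P' x) = 0 := by
    rw [← intervalIntegral.integral_add hA hB]
    rw [intervalIntegral.integral_deriv_mul_eq_sub
      (u := fun y : ℝ => ((deriv Q y : ℝ) : ℂ)) (v := P)
      (u' := fun y : ℝ => ((deriv (deriv Q) y : ℝ) : ℂ)) (v' := P')
      (fun x _ => ((hdQdiff x).hasDerivAt).ofReal_comp)
      (fun x _ => hP x)
      ((Complex.continuous_ofReal.comp hddQcont).intervalIntegrable _ _)
      (hP'c.intervalIntegrable _ _)]
    have e1 : deriv Q (a - 1) = 0 := hdQ0 _ (fun h => by linarith [h.1])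
    have e2 : deriv Q (b + 1) = 0 := hdQ0 _ (fun h => by linarith [h.2])
    simp [e1, e2]
  rw [h1, h2]
  exact eq_neg_of_add_eq_zero_left key

/-- Matrix element of the current between two incident-plus-reflected waves:
`⟨e^{ik₁x} + r₁e^{−ik₁x}| I |e^{ik₂x} + r₂e^{−ik₂x}⟩ = (k₁+k₂)Q̂'(k₁−k₂)
  + (k₂−k₁)conj(r₁)Q̂'(−k₁−k₂) + (k₁−k₂)r₂Q̂'(k₁+k₂) − (k₁+k₂)conj(r₁)r₂Q̂'(k₂−k₁)`. -/
theorem current_matrix_element_reflected (Q : ℝ → ℝ) (hQ : ContDiff ℝ (⊤ : ℕ∞) Q) (a b : ℝ)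
    (ha : 0 < a) (hab : a < b)
    (hQ0 : ∀ x : ℝ, x ≤ a → Q x = 0) (hQ1 : ∀ x : ℝ, b ≤ x → Q x = 1)
    (k₁ k₂ : ℝ) (r₁ r₂ : ℂ) :
    (∫ x : ℝ, (starRingEnd ℂ)
        (Complex.exp (Complex.I * (k₁ : ℂ) * (x : ℂ)) +
          r₁ * Complex.exp (-Complex.I * (k₁ : ℂ) * (x : ℂ))) *
        currentOp Q (fun y : ℝ =>
          Complex.exp (Complex.I * (k₂ : ℂ) * (y : ℂ)) +
            r₂ * Complex.exp (-Complex.I * (k₂ : ℂ) * (y : ℂ))) x)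
      = ((k₁ : ℂ) + (k₂ : ℂ)) * QhatD Q (k₁ - k₂)
        + ((k₂ : ℂ) - (k₁ : ℂ)) * (starRingEnd ℂ) r₁ * QhatD Q (-k₁ - k₂)
        + ((k₁ : ℂ) - (k₂ : ℂ)) * r₂ * QhatD Q (k₁ + k₂)
        - ((k₁ : ℂ) + (k₂ : ℂ)) * (starRingEnd ℂ) r₁ * r₂ * QhatD Q (k₂ - k₁) := by
  have hQ' : ContDiff ℝ ((⊤:ℕ∞) : WithTop ℕ∞) Q := hQ.of_le (by simp)
  have hdQ : ContDiff ℝ ((⊤:ℕ∞) : WithTop ℕ∞) (deriv Q) := (contDiff_infty_iff_deriv.mp hQ').2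
  have hdQdiff : Differentiable ℝ (deriv Q) := hdQ.differentiable (by simp)
  have hdQcont : Continuous (deriv Q) := hdQ.continuous
  have hddQcont : Continuous (deriv (deriv Q)) := (contDiff_infty_iff_deriv.mp hdQ).2.continuous
  have hdQ0 : ∀ x : ℝ, x ∉ Set.Icc a b → deriv Q x = 0 := by
    intro x hx
    rw [Set.mem_Icc, not_and_or, not_le, not_le] at hx
    rcases hx with hx | hx
    · have hev : Q =ᶠ[nhds x] fun _ => (0 : ℝ) := by
        filter_upwards [Iio_mem_nhds hx] with y hy using hQ0 y hy.le
      rw [hev.deriv_eq]; exact deriv_const x 0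
    · have hev : Q =ᶠ[nhds x] fun _ => (1 : ℝ) := by
        filter_upwards [Ioi_mem_nhds hx] with y hy using hQ1 y hy.le
      rw [hev.deriv_eq]; exact deriv_const x 1
  have hddQ0 : ∀ x : ℝ, x ∉ Set.Icc a b → deriv (deriv Q) x = 0 := by
    intro x hx
    rw [Set.mem_Icc, not_and_or, not_le, not_le] at hx
    have hev : deriv Q =ᶠ[nhds x] fun _ => (0 : ℝ) := by
      rcases hx with hx | hx
      · filter_upwards [Iio_mem_nhds hx] with y hy
        exact hdQ0 y (fun h => absurd h.1 (not_le.mpr hy))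
      · filter_upwards [Ioi_mem_nhds hx] with y hy
        exact hdQ0 y (fun h => absurd h.2 (not_le.mpr hy))
    rw [hev.deriv_eq]; exact deriv_const x 0
  have integAux : ∀ (w : ℝ → ℝ), Continuous w → (∀ x : ℝ, x ∉ Set.Icc a b → w x = 0) →
      ∀ (g : ℝ → ℂ), Continuous g → Integrable (fun x : ℝ => ((w x : ℝ) : ℂ) * g x) := by
    intro w hw hw0 g hg
    apply Continuous.integrable_of_hasCompactSupport
      ((Complex.continuous_ofReal.comp hw).mul hg)
    apply HasCompactSupport.intro (isCompact_Icc (a := a) (b := b))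
    intro x hx
    simp [hw0 x hx]
  have hg' : ∀ x : ℝ, HasDerivAt (fun y : ℝ => ((deriv Q y : ℝ) : ℂ))
      ((deriv (deriv Q) x : ℝ) : ℂ) x :=
    fun x => ((hdQdiff x).hasDerivAt).ofReal_comp
  set F : ℝ → ℂ := fun y : ℝ =>
    Complex.exp (Complex.I * (k₂ : ℂ) * (y : ℂ)) +
      r₂ * Complex.exp (-Complex.I * (k₂ : ℂ) * (y : ℂ)) with hF
  set G : ℝ → ℂ := fun y : ℝ =>
    Complex.I * (k₂ : ℂ) * Complex.exp (Complex.I * (k₂ : ℂ) * (y : ℂ)) +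
      r₂ * (-Complex.I * (k₂ : ℂ) * Complex.exp (-Complex.I * (k₂ : ℂ) * (y : ℂ))) with hG
  set Cψ : ℝ → ℂ := fun y : ℝ =>
    Complex.exp (-Complex.I * (k₁ : ℂ) * (y : ℂ)) +
      (starRingEnd ℂ) r₁ * Complex.exp (Complex.I * (k₁ : ℂ) * (y : ℂ)) with hCψ
  set DCψ : ℝ → ℂ := fun y : ℝ =>
    -Complex.I * (k₁ : ℂ) * Complex.exp (-Complex.I * (k₁ : ℂ) * (y : ℂ)) +
      (starRingEnd ℂ) r₁ * (Complex.I * (k₁ : ℂ) * Complex.exp (Complex.I * (k₁ : ℂ) * (y : ℂ))) with hDCψ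
  set P : ℝ → ℂ := fun y : ℝ => -Complex.I * (Cψ y * F y) with hPdef
  set P' : ℝ → ℂ := fun y : ℝ => -Complex.I * (DCψ y * F y + Cψ y * G y) with hP'def
  set R : ℝ → ℂ := fun y : ℝ => -(2 : ℂ) * Complex.I * (Cψ y * G y) with hRdef
  have hFd : ∀ x : ℝ, HasDerivAt F (G x) x :=
    fun x => (expE_hasDerivAt _ x).add ((expE_hasDerivAt _ x).const_mul r₂)
  have hCd : ∀ x : ℝ, HasDerivAt Cψ (DCψ x) x :=
    fun x => (expE_hasDerivAt _ x).add ((expE_hasDerivAt _ x).const_mul _)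
  have hPd : ∀ x : ℝ, HasDerivAt P (P' x) x :=
    fun x => ((hCd x).mul (hFd x)).const_mul (-Complex.I)
  have hFc : Continuous F := by rw [hF]; fun_prop
  have hGc : Continuous G := by rw [hG]; fun_prop
  have hCc : Continuous Cψ := by rw [hCψ]; fun_prop
  have hDCc : Continuous DCψ := by rw [hDCψ]; fun_prop
  have hPc : Continuous P := by rw [hPdef]; exact (continuous_const.mul (hCc.mul hFc))
  have hP'c : Continuous P' := by
    rw [hP'def]; exact continuous_const.mul ((hDCc.mul hFc).add (hCc.mul hGc))
  have hRc : Continuous R := by rw [hRdef]; exact continuous_const.mul (hCc.mul hGc)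
  have hpoint : ∀ x : ℝ, (starRingEnd ℂ)
        (Complex.exp (Complex.I * (k₁ : ℂ) * (x : ℂ)) +
          r₁ * Complex.exp (-Complex.I * (k₁ : ℂ) * (x : ℂ))) *
        currentOp Q F x
      = ((deriv (deriv Q) x : ℝ) : ℂ) * P x + ((deriv Q x : ℝ) : ℂ) * R x := by
    intro x
    have hconj : (starRingEnd ℂ) (Complex.exp (Complex.I * (k₁ : ℂ) * (x : ℂ)) +
        r₁ * Complex.exp (-Complex.I * (k₁ : ℂ) * (x : ℂ))) = Cψ x := by
      rw [hCψ]
      simp only [map_add, map_mul, ← Complex.exp_conj, map_neg, Complex.conj_I,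
        Complex.conj_ofReal]
      ring_nf
    have hd1 : deriv (fun y : ℝ => ((deriv Q y : ℝ) : ℂ) * F y) x
        = ((deriv (deriv Q) x : ℝ) : ℂ) * F x + ((deriv Q x : ℝ) : ℂ) * G x :=
      ((hg' x).mul (hFd x)).deriv
    have hd2 : deriv F x = G x := (hFd x).deriv
    simp only [currentOp]
    rw [hd1, hd2, hconj, hPdef, hRdef]
    ring
  simp only [hpoint]
  rw [MeasureTheory.integral_add (integAux _ hddQcont hddQ0 _ hPc)
    (integAux _ hdQcont hdQ0 _ hRc)]
  rw [ibp_aux Q a b hdQdiff hdQcont hddQcont hdQ0 hddQ0 P P' hPd hPc hP'c]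
  rw [neg_add_eq_sub, ← MeasureTheory.integral_sub (integAux _ hdQcont hdQ0 _ hRc)
    (integAux _ hdQcont hdQ0 _ hP'c)]
  have hpoint2 : ∀ x : ℝ, ((deriv Q x : ℝ) : ℂ) * R x - ((deriv Q x : ℝ) : ℂ) * P' x
      = ((k₁ : ℂ) + (k₂ : ℂ)) * (((deriv Q x : ℝ) : ℂ) *
          Complex.exp (-Complex.I * ((k₁ - k₂ : ℝ) : ℂ) * (x : ℂ)))
        + ((k₂ : ℂ) - (k₁ : ℂ)) * (starRingEnd ℂ) r₁ * (((deriv Q x : ℝ) : ℂ) *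
          Complex.exp (-Complex.I * ((-k₁ - k₂ : ℝ) : ℂ) * (x : ℂ)))
        + ((k₁ : ℂ) - (k₂ : ℂ)) * r₂ * (((deriv Q x : ℝ) : ℂ) *
          Complex.exp (-Complex.I * ((k₁ + k₂ : ℝ) : ℂ) * (x : ℂ)))
        - ((k₁ : ℂ) + (k₂ : ℂ)) * (starRingEnd ℂ) r₁ * r₂ * (((deriv Q x : ℝ) : ℂ) *
          Complex.exp (-Complex.I * ((k₂ - k₁ : ℝ) : ℂ) * (x : ℂ))) := by
    intro x
    have e1 : Complex.exp (-Complex.I * ((k₁ - k₂ : ℝ) : ℂ) * (x : ℂ))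
        = Complex.exp (-Complex.I * (k₁ : ℂ) * (x : ℂ)) *
          Complex.exp (Complex.I * (k₂ : ℂ) * (x : ℂ)) := by
      rw [← Complex.exp_add]; congr 1; push_cast; ring
    have e2 : Complex.exp (-Complex.I * ((-k₁ - k₂ : ℝ) : ℂ) * (x : ℂ))
        = Complex.exp (Complex.I * (k₁ : ℂ) * (x : ℂ)) *
          Complex.exp (Complex.I * (k₂ : ℂ) * (x : ℂ)) := by
      rw [← Complex.exp_add]; congr 1; push_cast; ring
    have e3 : Complex.exp (-Complex.I * ((k₁ + k₂ : ℝ) : ℂ) * (x : ℂ))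
        = Complex.exp (-Complex.I * (k₁ : ℂ) * (x : ℂ)) *
          Complex.exp (-Complex.I * (k₂ : ℂ) * (x : ℂ)) := by
      rw [← Complex.exp_add]; congr 1; push_cast; ring
    have e4 : Complex.exp (-Complex.I * ((k₂ - k₁ : ℝ) : ℂ) * (x : ℂ))
        = Complex.exp (Complex.I * (k₁ : ℂ) * (x : ℂ)) *
          Complex.exp (-Complex.I * (k₂ : ℂ) * (x : ℂ)) := by
      rw [← Complex.exp_add]; congr 1; push_cast; ring
    rw [e1, e2, e3, e4, hRdef, hP'def, hCψ, hDCψ, hF, hG]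
    ring_nf
    simp only [Complex.I_sq]
    ring
  simp only [hpoint2]
  have i1 := integAux _ hdQcont hdQ0
    (fun x : ℝ => Complex.exp (-Complex.I * ((k₁ - k₂ : ℝ) : ℂ) * (x : ℂ))) (by fun_prop)
  have i2 := integAux _ hdQcont hdQ0
    (fun x : ℝ => Complex.exp (-Complex.I * ((-k₁ - k₂ : ℝ) : ℂ) * (x : ℂ))) (by fun_prop)
  have i3 := integAux _ hdQcont hdQ0
    (fun x : ℝ => Complex.exp (-Complex.I * ((k₁ + k₂ : ℝ) : ℂ) * (x : ℂ))) (by fun_prop)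
  have i4 := integAux _ hdQcont hdQ0
    (fun x : ℝ => Complex.exp (-Complex.I * ((k₂ - k₁ : ℝ) : ℂ) * (x : ℂ))) (by fun_prop)
  have j1 : Integrable (fun x : ℝ => ((k₁ : ℂ) + (k₂ : ℂ)) * (((deriv Q x : ℝ) : ℂ) *
      Complex.exp (-Complex.I * ((k₁ - k₂ : ℝ) : ℂ) * (x : ℂ)))) := i1.const_mul _
  have j2 : Integrable (fun x : ℝ => ((k₂ : ℂ) - (k₁ : ℂ)) * (starRingEnd ℂ) r₁ *
      (((deriv Q x : ℝ) : ℂ) * Complex.exp (-Complex.I * ((-k₁ - k₂ : ℝ) : ℂ) * (x : ℂ)))) :=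
    i2.const_mul _
  have j3 : Integrable (fun x : ℝ => ((k₁ : ℂ) - (k₂ : ℂ)) * r₂ *
      (((deriv Q x : ℝ) : ℂ) * Complex.exp (-Complex.I * ((k₁ + k₂ : ℝ) : ℂ) * (x : ℂ)))) :=
    i3.const_mul _
  have j4 : Integrable (fun x : ℝ => ((k₁ : ℂ) + (k₂ : ℂ)) * (starRingEnd ℂ) r₁ * r₂ *
      (((deriv Q x : ℝ) : ℂ) * Complex.exp (-Complex.I * ((k₂ - k₁ : ℝ) : ℂ) * (x : ℂ)))) :=
    i4.const_mul _
  have j12 : Integrable (fun x : ℝ => ((k₁ : ℂ) + (k₂ : ℂ)) * (((deriv Q x : ℝ) : ℂ) *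
      Complex.exp (-Complex.I * ((k₁ - k₂ : ℝ) : ℂ) * (x : ℂ)))
      + ((k₂ : ℂ) - (k₁ : ℂ)) * (starRingEnd ℂ) r₁ *
      (((deriv Q x : ℝ) : ℂ) * Complex.exp (-Complex.I * ((-k₁ - k₂ : ℝ) : ℂ) * (x : ℂ)))) := by
    exact j1.add j2
  have j123 : Integrable (fun x : ℝ => ((k₁ : ℂ) + (k₂ : ℂ)) * (((deriv Q x : ℝ) : ℂ) *
      Complex.exp (-Complex.I * ((k₁ - k₂ : ℝ) : ℂ) * (x : ℂ)))
      + ((k₂ : ℂ) - (k₁ : ℂ)) * (starRingEnd ℂ) r₁ *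
      (((deriv Q x : ℝ) : ℂ) * Complex.exp (-Complex.I * ((-k₁ - k₂ : ℝ) : ℂ) * (x : ℂ)))
      + ((k₁ : ℂ) - (k₂ : ℂ)) * r₂ *
      (((deriv Q x : ℝ) : ℂ) * Complex.exp (-Complex.I * ((k₁ + k₂ : ℝ) : ℂ) * (x : ℂ)))) := by
    exact j12.add j3
  rw [MeasureTheory.integral_sub j123 j4, MeasureTheory.integral_add j12 j3,
    MeasureTheory.integral_add j1 j2]
  rw [MeasureTheory.integral_const_mul, MeasureTheory.integral_const_mul,
    MeasureTheory.integral_const_mul, MeasureTheory.integral_const_mul]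
  simp only [QhatD]
end

section
/- Let H and Q be bounded operators on a complex Hilbert space, and for s ∈ ℝ set Q(s) = e^{iHs} Q e^{−iHs} and I(s) = i e^{iHs} (HQ − QH) e^{−iHs}. Then for every t ≥ 0, ∫₀ᵗ ∫₀ᵗ T(I(t₁)I(t₂)) dt₂ dt₁ + ∫₀ᵗ [Q(s), I(s)] ds = Q(t)² − 2 Q(t) Q + Q², where T(I(t₁)I(t₂)) = I(t₁)I(t₂) if t₁ ≥ t₂ and I(t₂)I(t₁) otherwise, and [A,B] = AB − BA. (This is the second-order coefficient of the identity equating the T-ordered exponential of the interaction Hamiltonian with the Matthews T*-ordered exponential of the current.) -/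
open MeasureTheory Filter

/-! Only two facts about `Q(s)` matter: it is differentiable with continuous derivative
`I(s)`, and `Q(0) = Q`. Splitting the inner integral at `t₁` and applying the fundamental
theorem of calculus on each piece gives `I(t₁)(Q(t₁) − Q) + (Q(t) − Q(t₁))I(t₁)`. Adding the
commutator `[Q(t₁), I(t₁)]` cancels every term in which `Q(t₁)` appears, leaving
`Q(t)I(t₁) − I(t₁)Q`, whose integral over `[0, t]` is `Q(t)(Q(t) − Q) − (Q(t) − Q)Q`. -/

/-- Heisenberg evolution of the charge: `Q(s) = e^{iHs} Q e^{−iHs}`. -/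
noncomputable def heisQ {A : Type*} [NormedRing A] [NormedAlgebra ℂ A] [CompleteSpace A]
    (H Q : A) (s : ℝ) : A :=
  NormedSpace.exp ((Complex.I * (s : ℂ)) • H) * Q *
    NormedSpace.exp ((-(Complex.I * (s : ℂ))) • H)

/-- The current `I(s) = i e^{iHs}(HQ − QH)e^{−iHs}`, the time derivative of `Q(s)`. -/
noncomputable def heisI {A : Type*} [NormedRing A] [NormedAlgebra ℂ A] [CompleteSpace A]
    (H Q : A) (s : ℝ) : A :=
  Complex.I • (NormedSpace.exp ((Complex.I * (s : ℂ)) • H) * (H * Q - Q * H) *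
    NormedSpace.exp ((-(Complex.I * (s : ℂ))) • H))

noncomputable def timeOrdered {A : Type*} [Mul A] (F : ℝ → A) (t₁ t₂ : ℝ) : A :=
  if t₂ ≤ t₁ then F t₁ * F t₂ else F t₂ * F t₁

section TimeOrdered

variable {A : Type*} [NormedRing A] [NormedAlgebra ℝ A] [CompleteSpace A] {f f' : ℝ → A}

theorem integral_timeOrdered (hf : ∀ x, HasDerivAt f (f' x) x) (hf' : Continuous f')
    {a b s : ℝ} (hs : s ∈ Set.Icc a b) :
    ∫ u in a..b, timeOrdered f' s u = f' s * (f s - f a) + (f b - f s) * f' s := by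
  have hcont : Continuous (timeOrdered f' s) :=
    Continuous.if_le (by fun_prop) (by fun_prop) continuous_id continuous_const
      fun u hu => by rw [hu]
  have before : ∫ u in a..s, timeOrdered f' s u = f' s * f s - f' s * f a := by
    rw [intervalIntegral.integral_congr (g := fun u => f' s * f' u) fun u hu => by
      rw [Set.uIcc_of_le hs.1] at hu; exact if_pos hu.2]
    exact intervalIntegral.integral_eq_sub_of_hasDerivAt (fun u _ => (hf u).const_mul (f' s))
      ((hf'.intervalIntegrable a s).const_mul (f' s))
  have after : ∫ u in s..b, timeOrdered f' s u = f b * f' s - f s * f' s := by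
    rw [intervalIntegral.integral_congr (g := fun u => f' u * f' s) fun u hu => by
      rw [Set.uIcc_of_le hs.2] at hu
      rcases hu.1.eq_or_lt with rfl | hlt
      · exact if_pos le_rfl
      · exact if_neg hlt.not_ge]
    exact intervalIntegral.integral_eq_sub_of_hasDerivAt (fun u _ => (hf u).mul_const (f' s))
      ((hf'.intervalIntegrable s b).mul_const (f' s))
  rw [← intervalIntegral.integral_add_adjacent_intervals (hcont.intervalIntegrable a s)
    (hcont.intervalIntegrable s b), before, after, mul_sub, sub_mul]

theorem integral_integral_timeOrdered_add_integral_commutator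
    (hf : ∀ x, HasDerivAt f (f' x) x) (hf' : Continuous f') {a b : ℝ} (hab : a ≤ b) :
    (∫ s in a..b, ∫ u in a..b, timeOrdered f' s u) + ∫ s in a..b, (f s * f' s - f' s * f s)
      = f b * f b - 2 * (f b * f a) + f a * f a := by
  have hf_cont : Continuous f := continuous_iff_continuousAt.2 fun x => (hf x).continuousAt
  rw [intervalIntegral.integral_congr fun s hs =>
      integral_timeOrdered hf hf' (Set.uIcc_of_le hab ▸ hs),
    ← intervalIntegral.integral_add (Continuous.intervalIntegrable (by fun_prop) a b)
      (Continuous.intervalIntegrable (by fun_prop) a b)]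
  have commutator_cancels : ∀ s, f' s * (f s - f a) + (f b - f s) * f' s
      + (f s * f' s - f' s * f s) = f b * f' s - f' s * f a := fun s => by noncomm_ring
  simp only [commutator_cancels]
  rw [intervalIntegral.integral_eq_sub_of_hasDerivAt
    (f := fun s => f b * f s - f s * f a)
    (fun s _ => ((hf s).const_mul (f b)).sub ((hf s).mul_const (f a)))
    (Continuous.intervalIntegrable (by fun_prop) a b)]
  noncomm_ring

end TimeOrdered

theorem mul_ofReal_smul {E : Type*} [AddCommGroup E] [Module ℂ E] (c : ℂ) (u : ℝ) (x : E) :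
    (c * u) • x = u • c • x := by
  rw [mul_comm, ← smul_smul]
  rfl

section Heisenberg

variable {A : Type*} [NormedRing A] [NormedAlgebra ℂ A] [CompleteSpace A]

theorem hasDerivAt_exp_mul_ofReal_smul (c : ℂ) (H : A) (s : ℝ) :
    HasDerivAt (fun s : ℝ => NormedSpace.exp ((c * s) • H))
      (NormedSpace.exp ((c * s) • H) * c • H) s := by
  simpa only [mul_ofReal_smul] using hasDerivAt_exp_smul_const (𝕂 := ℝ) (c • H) s

theorem hasDerivAt_exp_mul_ofReal_smul' (c : ℂ) (H : A) (s : ℝ) :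
    HasDerivAt (fun s : ℝ => NormedSpace.exp ((c * s) • H))
      (c • H * NormedSpace.exp ((c * s) • H)) s := by
  simpa only [mul_ofReal_smul] using hasDerivAt_exp_smul_const' (𝕂 := ℝ) (c • H) s

theorem hasDerivAt_heisQ (H Q : A) (s : ℝ) : HasDerivAt (heisQ H Q) (heisI H Q s) s := by
  have hV := hasDerivAt_exp_mul_ofReal_smul' (-Complex.I) H s
  simp only [neg_mul] at hV
  refine (((hasDerivAt_exp_mul_ofReal_smul Complex.I H s).mul_const Q).mul hV).congr_deriv ?_
  simp only [heisI, neg_smul, neg_mul, mul_neg, smul_mul_assoc, mul_smul_comm, mul_sub, sub_mul,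
    smul_sub, mul_assoc]
  abel

theorem continuous_heisQ (H Q : A) : Continuous (heisQ H Q) :=
  continuous_iff_continuousAt.2 fun s => (hasDerivAt_heisQ H Q s).continuousAt

theorem heisI_eq_smul_heisQ (H Q : A) :
    heisI H Q = fun s => Complex.I • heisQ H (H * Q - Q * H) s :=
  rfl

theorem continuous_heisI (H Q : A) : Continuous (heisI H Q) := by
  rw [heisI_eq_smul_heisQ]
  exact (continuous_heisQ H _).const_smul Complex.I

@[simp]
theorem heisQ_zero (H Q : A) : heisQ H Q 0 = Q := by
  simp [heisQ]

end Heisenberg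

/-- Second-order coefficient of the identity equating the `T`-ordered exponential of the
interaction Hamiltonian with the Matthews `T*`-ordered exponential of the current:
`∫₀ᵗ∫₀ᵗ T(I(t₁)I(t₂)) + ∫₀ᵗ [Q(s),I(s)] ds = Q(t)² − 2Q(t)Q + Q²`. -/
theorem matthews_second_order {A : Type*} [NormedRing A] [NormedAlgebra ℂ A]
    [CompleteSpace A] (H Q : A) (t : ℝ) (ht : 0 ≤ t) :
    (∫ t₁ in (0:ℝ)..t, ∫ t₂ in (0:ℝ)..t,
        (if t₂ ≤ t₁ then heisI H Q t₁ * heisI H Q t₂ else heisI H Q t₂ * heisI H Q t₁))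
      + (∫ s in (0:ℝ)..t, (heisQ H Q s * heisI H Q s - heisI H Q s * heisQ H Q s))
      = heisQ H Q t * heisQ H Q t - 2 * (heisQ H Q t * Q) + Q * Q := by
  simpa only [timeOrdered, heisQ_zero] using
    integral_integral_timeOrdered_add_integral_commutator (hasDerivAt_heisQ H Q)
      (continuous_heisI H Q) ht
end
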